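/- The 2n×2n matrix-valued function S(t) = [[−(6/t³) I, (3/t²) I],[(3/t²) I, −(2/t) I]] (in n×n blocks), defined for t > 0, solves the matrix Riccati equation S'(t) = S(t)C + Cᵀ S(t) + S(t) D S(t), and S(t)⁻¹ → 0 as t → 0⁺. (This is the case K = 0 of the explicit-solution lemma, with s₀(t) = t⁴, s₁(t) = 12t, s₂(t) = 6t² in the normalization S = ½[[−(s₁/s₀)I, (s₂/s₀)I],[(s₂/s₀)I, −(s₀'/s₀)I]].) -/

import Mathlib

/-!
All matrices involved have the form `[[a I, b I], [c I, d I]]`, and such matrices multiply,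
transpose and invert exactly like the scalar `2 × 2` matrices `[[a, b], [c, d]]`. Hence the
Riccati identity is a scalar computation, both sides being `[[18/t⁴, -6/t³], [-6/t³, 2/t²]]`,
and `det [[-6/t³, 3/t²], [3/t², -2/t]] = 3/t⁴` gives
`S(t)⁻¹ = [[-(2/3) t³ I, -t² I], [-t² I, -2t I]]`, which is polynomial in `t` and vanishes at `0`.
-/

noncomputable section
open Real Set Matrix Filter

/-- The `2n × 2n` matrix `C = [[0, −I], [0, 0]]` in `n × n` block form. -/
def Cmat (n : ℕ) : Matrix (Fin n ⊕ Fin n) (Fin n ⊕ Fin n) ℝ :=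
  Matrix.fromBlocks 0 (-1) 0 0

/-- The `2n × 2n` matrix `D = [[0, 0], [0, 2I]]` in `n × n` block form. -/
def Dmat (n : ℕ) : Matrix (Fin n ⊕ Fin n) (Fin n ⊕ Fin n) ℝ :=
  Matrix.fromBlocks 0 0 0 ((2 : ℝ) • 1)

/-- The block-diagonal matrix `[[a·I, 0], [0, b·I]]`. -/
def blockDiag (n : ℕ) (a b : ℝ) : Matrix (Fin n ⊕ Fin n) (Fin n ⊕ Fin n) ℝ :=
  Matrix.fromBlocks (a • 1) 0 0 (b • 1)

/-- The matrix `½·[[-(s₁/s₀)I, (s₂/s₀)I], [(s₂/s₀)I, -(s₀'/s₀)I]]`. -/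
def harnackMatrix (n : ℕ) (s₀ s₁ s₂ : ℝ → ℝ) (t : ℝ) :
    Matrix (Fin n ⊕ Fin n) (Fin n ⊕ Fin n) ℝ :=
  (1/2 : ℝ) • Matrix.fromBlocks (-(s₁ t / s₀ t) • 1) ((s₂ t / s₀ t) • 1)
    ((s₂ t / s₀ t) • 1) (-(deriv s₀ t / s₀ t) • 1)

/-- The explicit matrix `S(t) = [[−(6/t³)I, (3/t²)I], [(3/t²)I, −(2/t)I]]`. -/
def Skolm (n : ℕ) (t : ℝ) : Matrix (Fin n ⊕ Fin n) (Fin n ⊕ Fin n) ℝ :=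
  Matrix.fromBlocks (-(6 / t ^ 3) • 1) ((3 / t ^ 2) • 1) ((3 / t ^ 2) • 1) (-(2 / t) • 1)

def scalarBlocks {m R : Type*} [DecidableEq m] [Semiring R] (a b c d : R) :
    Matrix (m ⊕ m) (m ⊕ m) R :=
  fromBlocks (a • 1) (b • 1) (c • 1) (d • 1)

section ScalarBlocks

variable {m R : Type*} [DecidableEq m]

theorem scalarBlocks_add [Semiring R] (a b c d a' b' c' d' : R) :
    (scalarBlocks a b c d + scalarBlocks a' b' c' d' : Matrix (m ⊕ m) (m ⊕ m) R) =
      scalarBlocks (a + a') (b + b') (c + c') (d + d') := by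
  simp only [scalarBlocks, fromBlocks_add, add_smul]

theorem scalarBlocks_transpose [Semiring R] (a b c d : R) :
    (scalarBlocks a b c d : Matrix (m ⊕ m) (m ⊕ m) R)ᵀ = scalarBlocks a c b d := by
  simp only [scalarBlocks, fromBlocks_transpose, transpose_smul, transpose_one]

theorem scalarBlocks_mul [Fintype m] [CommSemiring R] (a b c d a' b' c' d' : R) :
    (scalarBlocks a b c d * scalarBlocks a' b' c' d' : Matrix (m ⊕ m) (m ⊕ m) R) =
      scalarBlocks (a * a' + b * c') (a * b' + b * d') (c * a' + d * c') (c * b' + d * d') := by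
  simp only [scalarBlocks, fromBlocks_multiply, smul_mul_smul_comm, mul_one, add_smul]

theorem scalarBlocks_one_zero_zero_one [Semiring R] :
    (scalarBlocks 1 0 0 1 : Matrix (m ⊕ m) (m ⊕ m) R) = 1 := by
  simp only [scalarBlocks, one_smul, zero_smul, fromBlocks_one]

theorem scalarBlocks_inv [Fintype m] [Field R] {a b c d : R} (h : a * d - b * c ≠ 0) :
    (scalarBlocks a b c d : Matrix (m ⊕ m) (m ⊕ m) R)⁻¹ =
      scalarBlocks (d / (a * d - b * c)) (-b / (a * d - b * c)) (-c / (a * d - b * c))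
        (a / (a * d - b * c)) := by
  set Δ := a * d - b * c with hΔ
  refine inv_eq_right_inv ?_
  rw [scalarBlocks_mul, ← scalarBlocks_one_zero_zero_one]
  congr 1 <;> field_simp <;> rw [hΔ] <;> ring

theorem hasDerivAt_scalarBlocks_apply {𝕜 : Type*} [NontriviallyNormedField 𝕜]
    {a b c d : 𝕜 → 𝕜} {a' b' c' d' x : 𝕜} (ha : HasDerivAt a a' x) (hb : HasDerivAt b b' x)
    (hc : HasDerivAt c c' x) (hd : HasDerivAt d d' x) (i j : m ⊕ m) :
    HasDerivAt (fun τ => (scalarBlocks (a τ) (b τ) (c τ) (d τ) : Matrix (m ⊕ m) (m ⊕ m) 𝕜) i j)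
      ((scalarBlocks a' b' c' d' : Matrix (m ⊕ m) (m ⊕ m) 𝕜) i j) x := by
  rcases i with i | i <;> rcases j with j | j <;>
    simp only [scalarBlocks, fromBlocks_apply₁₁, fromBlocks_apply₁₂, fromBlocks_apply₂₁,
      fromBlocks_apply₂₂, Matrix.smul_apply, smul_eq_mul]
  exacts [ha.mul_const _, hb.mul_const _, hc.mul_const _, hd.mul_const _]

theorem tendsto_scalarBlocks_apply {α : Type*} [Semiring R] [TopologicalSpace R]
    [IsTopologicalSemiring R] {l : Filter α} {a b c d : α → R} {a₀ b₀ c₀ d₀ : R}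
    (ha : Tendsto a l (nhds a₀)) (hb : Tendsto b l (nhds b₀)) (hc : Tendsto c l (nhds c₀))
    (hd : Tendsto d l (nhds d₀)) (i j : m ⊕ m) :
    Tendsto (fun τ => (scalarBlocks (a τ) (b τ) (c τ) (d τ) : Matrix (m ⊕ m) (m ⊕ m) R) i j) l
      (nhds ((scalarBlocks a₀ b₀ c₀ d₀ : Matrix (m ⊕ m) (m ⊕ m) R) i j)) := by
  rcases i with i | i <;> rcases j with j | j <;>
    simp only [scalarBlocks, fromBlocks_apply₁₁, fromBlocks_apply₁₂, fromBlocks_apply₂₁,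
      fromBlocks_apply₂₂, Matrix.smul_apply, smul_eq_mul]
  exacts [ha.mul_const _, hb.mul_const _, hc.mul_const _, hd.mul_const _]

end ScalarBlocks

theorem hasDerivAt_const_div_pow {𝕜 : Type*} [NontriviallyNormedField 𝕜] (c : 𝕜) (k : ℕ)
    {x : 𝕜} (hx : x ≠ 0) :
    HasDerivAt (fun τ => c / τ ^ k) (-(k * c) / x ^ (k + 1)) x := by
  refine ((hasDerivAt_const x c).div (hasDerivAt_pow k x) (pow_ne_zero k hx)).congr_deriv ?_
  rcases k with _ | k
  · simp
  · rw [Nat.add_sub_cancel]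
    field_simp
    ring

theorem Skolm_eq (n : ℕ) (t : ℝ) :
    Skolm n t = scalarBlocks (-(6 / t ^ 3)) (3 / t ^ 2) (3 / t ^ 2) (-(2 / t)) :=
  rfl

theorem Cmat_eq (n : ℕ) : Cmat n = scalarBlocks 0 (-1) 0 0 := by
  simp only [Cmat, scalarBlocks, zero_smul, neg_smul, one_smul]

theorem Dmat_eq (n : ℕ) : Dmat n = scalarBlocks 0 0 0 2 := by
  simp only [Dmat, scalarBlocks, zero_smul]

theorem riccati_rhs_Skolm (n : ℕ) {t : ℝ} (ht : t ≠ 0) :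
    Skolm n t * Cmat n + (Cmat n)ᵀ * Skolm n t + Skolm n t * Dmat n * Skolm n t =
      scalarBlocks (18 / t ^ 4) (-6 / t ^ 3) (-6 / t ^ 3) (2 / t ^ 2) := by
  simp only [Skolm_eq, Cmat_eq, Dmat_eq, scalarBlocks_transpose, scalarBlocks_mul,
    scalarBlocks_add]
  congr 1 <;> field_simp <;> ring

theorem Skolm_inv (n : ℕ) {t : ℝ} (ht : t ≠ 0) :
    (Skolm n t)⁻¹ = scalarBlocks (-(2 / 3) * t ^ 3) (-t ^ 2) (-t ^ 2) (-2 * t) := by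
  have hdet : -(6 / t ^ 3) * -(2 / t) - 3 / t ^ 2 * (3 / t ^ 2) = 3 / t ^ 4 := by
    field_simp
    ring
  rw [Skolm_eq, scalarBlocks_inv (by rw [hdet]; positivity), hdet]
  congr 1 <;> field_simp
  norm_num

theorem hasDerivAt_Skolm_apply (n : ℕ) {t : ℝ} (ht : t ≠ 0) (i j : Fin n ⊕ Fin n) :
    HasDerivAt (fun τ => Skolm n τ i j)
      ((scalarBlocks (18 / t ^ 4) (-6 / t ^ 3) (-6 / t ^ 3) (2 / t ^ 2) :
        Matrix (Fin n ⊕ Fin n) (Fin n ⊕ Fin n) ℝ) i j) t := by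
  have h₁ : HasDerivAt (fun τ : ℝ => -(6 / τ ^ 3)) (18 / t ^ 4) t :=
    (hasDerivAt_const_div_pow 6 3 ht).neg.congr_deriv (by ring)
  have h₂ : HasDerivAt (fun τ : ℝ => 3 / τ ^ 2) (-6 / t ^ 3) t :=
    (hasDerivAt_const_div_pow 3 2 ht).congr_deriv (by norm_num)
  have h₃ : HasDerivAt (fun τ : ℝ => -(2 / τ)) (2 / t ^ 2) t := by
    have h := (hasDerivAt_const_div_pow 2 1 ht).neg
    simp only [pow_one, Nat.cast_one, one_mul, one_add_one_eq_two, neg_div, neg_neg] at h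
    exact h
  exact hasDerivAt_scalarBlocks_apply h₁ h₂ h₂ h₃ i j

theorem tendsto_Skolm_inv_apply (n : ℕ) (i j : Fin n ⊕ Fin n) :
    Tendsto (fun t => (Skolm n t)⁻¹ i j) (nhdsWithin 0 (Ioi 0)) (nhds 0) := by
  have hinv : (fun t => (Skolm n t)⁻¹ i j) =ᶠ[nhdsWithin 0 (Ioi 0)]
      fun t => (scalarBlocks (-(2 / 3) * t ^ 3) (-t ^ 2) (-t ^ 2) (-2 * t) :
        Matrix (Fin n ⊕ Fin n) (Fin n ⊕ Fin n) ℝ) i j := by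
    filter_upwards [self_mem_nhdsWithin] with t ht
    rw [Skolm_inv n ht.ne']
  have hcont : ∀ p : ℝ → ℝ, Continuous p → Tendsto p (nhdsWithin 0 (Ioi 0)) (nhds (p 0)) :=
    fun p hp => hp.continuousWithinAt.tendsto
  refine Tendsto.congr' hinv.symm ?_
  convert tendsto_scalarBlocks_apply (hcont _ ?_) (hcont _ ?_) (hcont _ ?_) (hcont _ ?_) i j
    using 2
  · simp [scalarBlocks]
  all_goals fun_prop

theorem riccati_explicit_case5_general (n : ℕ) :
    (∀ t : ℝ, 0 < t →
      ∀ i j, HasDerivAt (fun τ => Skolm n τ i j)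
        ((Skolm n t * Cmat n + (Cmat n)ᵀ * Skolm n t
          + Skolm n t * Dmat n * Skolm n t) i j) t) ∧
    (∀ i j, Tendsto (fun t => (Skolm n t)⁻¹ i j) (nhdsWithin 0 (Ioi 0)) (nhds 0)) := by
  refine ⟨fun t ht i j => ?_, tendsto_Skolm_inv_apply n⟩
  rw [riccati_rhs_Skolm n ht.ne']
  exact hasDerivAt_Skolm_apply n ht.ne' i j

/-- **Explicit solution of the Riccati equation, case `K = 0`** (Lemma 3.3 (5)):
`S(t) = [[−(6/t³)I, (3/t²)I], [(3/t²)I, −(2/t)I]]` solves `S' = SC + CᵀS + SDS` for `t > 0`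
and `S(t)⁻¹ → 0` as `t → 0⁺`. -/
theorem riccati_explicit_case5 (n : ℕ) (hn : 1 ≤ n) :
    (∀ t : ℝ, 0 < t →
      ∀ i j, HasDerivAt (fun τ => Skolm n τ i j)
        ((Skolm n t * Cmat n + (Cmat n)ᵀ * Skolm n t
          + Skolm n t * Dmat n * Skolm n t) i j) t) ∧
    (∀ i j, Tendsto (fun t => (Skolm n t)⁻¹ i j) (nhdsWithin 0 (Ioi 0)) (nhds 0)) :=
  riccati_explicit_case5_general n
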